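/- Let X_obs ⊆ ℝ^d be a nonempty closed set. For all continuous paths σ, τ : [0,1] → ℝ^d of bounded variation, |clr(σ) − clr(τ)| ≤ TV(σ − τ) + ∫₀¹ ‖σ(t) − τ(t)‖ dt; that is, the clearance function is 1-Lipschitz with respect to the BV norm of the difference. -/

import Mathlib

/-- Total variation of a path over `[0,1]`: the supremum over all partitions
`0 = b₀ < ⋯ < bₙ = 1` of `Σ ‖σ(bᵢ) − σ(bᵢ₋₁)‖`. -/
noncomputable def TV {d : ℕ} (σ : ℝ → EuclideanSpace ℝ (Fin d)) : ℝ :=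
  (eVariationOn σ (Set.Icc 0 1)).toReal

/-- The clearance `clr(σ) = inf_{s ∈ [0,1]} dist(σ(s), X_obs)` of a path. -/
noncomputable def clr {d : ℕ} (Xobs : Set (EuclideanSpace ℝ (Fin d)))
    (σ : ℝ → EuclideanSpace ℝ (Fin d)) : ℝ :=
  ⨅ s : Set.Icc (0:ℝ) 1, Metric.infDist (σ s) Xobs

lemma eVariationOn_sub_le' {d : ℕ} (σ τ : ℝ → EuclideanSpace ℝ (Fin d)) (s : Set ℝ) :
    eVariationOn (fun t => σ t - τ t) s ≤ eVariationOn σ s + eVariationOn τ s := by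
  rw [eVariationOn]
  apply iSup_le
  rintro ⟨n, u, hu, us⟩
  calc ∑ i ∈ Finset.range n, edist (σ (u (i+1)) - τ (u (i+1))) (σ (u i) - τ (u i))
      ≤ ∑ i ∈ Finset.range n,
        (edist (σ (u (i+1))) (σ (u i)) + edist (τ (u (i+1))) (τ (u i))) := by
        apply Finset.sum_le_sum
        intro i _
        rw [edist_dist, edist_dist, edist_dist, ← ENNReal.ofReal_add dist_nonneg dist_nonneg]
        exact ENNReal.ofReal_le_ofReal (dist_sub_sub_le _ _ _ _)
    _ = (∑ i ∈ Finset.range n, edist (σ (u (i+1))) (σ (u i)))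
        + ∑ i ∈ Finset.range n, edist (τ (u (i+1))) (τ (u i)) := Finset.sum_add_distrib
    _ ≤ eVariationOn σ s + eVariationOn τ s :=
        add_le_add (eVariationOn.sum_le (f := σ) (n := n) hu us) (eVariationOn.sum_le (f := τ) (n := n) hu us)

/-- For a nonempty closed obstacle set `X_obs ⊆ ℝ^d` and continuous paths `σ, τ`
of bounded variation, `|clr(σ) − clr(τ)| ≤ TV(σ − τ) + ∫₀¹ ‖σ(t) − τ(t)‖ dt`:
clearance is 1-Lipschitz with respect to the BV norm of the difference. -/
theorem clearance_lipschitz_BV {d : ℕ} (Xobs : Set (EuclideanSpace ℝ (Fin d)))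
    (hclosed : IsClosed Xobs) (hne : Xobs.Nonempty)
    (σ τ : ℝ → EuclideanSpace ℝ (Fin d))
    (hσcont : ContinuousOn σ (Set.Icc 0 1))
    (hσbv : BoundedVariationOn σ (Set.Icc 0 1))
    (hτcont : ContinuousOn τ (Set.Icc 0 1))
    (hτbv : BoundedVariationOn τ (Set.Icc 0 1)) :
    |clr Xobs σ - clr Xobs τ| ≤
      TV (fun t => σ t - τ t) + ∫ t in (0:ℝ)..1, ‖σ t - τ t‖ := by
  set δ : ℝ → EuclideanSpace ℝ (Fin d) := fun t => σ t - τ t with hδ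
  have hδbv : BoundedVariationOn δ (Set.Icc 0 1) := by
    intro h
    have := eVariationOn_sub_le' σ τ (Set.Icc 0 1)
    rw [h] at this
    exact ENNReal.add_ne_top.2 ⟨hσbv, hτbv⟩ (top_le_iff.mp this)
  have hδcont : ContinuousOn δ (Set.Icc 0 1) := hσcont.sub hτcont
  have hδint : IntervalIntegrable (fun t => ‖δ t‖) MeasureTheory.volume 0 1 := by
    apply ContinuousOn.intervalIntegrable
    rw [Set.uIcc_of_le zero_le_one]
    exact hδcont.norm
  set C : ℝ := TV δ + ∫ t in (0:ℝ)..1, ‖δ t‖ with hC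
  -- pointwise key bound
  have key : ∀ s ∈ Set.Icc (0:ℝ) 1, ‖δ s‖ ≤ C := by
    intro s hs
    have h1 : ∀ t ∈ Set.Icc (0:ℝ) 1, ‖δ s‖ ≤ TV δ + ‖δ t‖ := by
      intro t ht
      have := hδbv.dist_le hs ht
      rw [dist_eq_norm] at this
      calc ‖δ s‖ ≤ ‖δ s - δ t‖ + ‖δ t‖ := by have := norm_sub_norm_le (δ s) (δ t); linarith
        _ ≤ TV δ + ‖δ t‖ := by exact add_le_add_left this _
    have h2 : ∫ t in (0:ℝ)..1, ‖δ s‖ ≤ ∫ t in (0:ℝ)..1, (TV δ + ‖δ t‖) := by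
      apply intervalIntegral.integral_mono_on zero_le_one
      · exact intervalIntegrable_const
      · exact (intervalIntegrable_const).add hδint
      · exact h1
    rw [intervalIntegral.integral_const, intervalIntegral.integral_add
        intervalIntegrable_const hδint, intervalIntegral.integral_const] at h2
    simpa using h2
  -- lipschitz of inf over s
  have bdd : ∀ (f : ℝ → EuclideanSpace ℝ (Fin d)),
      BddBelow (Set.range fun s : Set.Icc (0:ℝ) 1 => Metric.infDist (f s) Xobs) := by
    intro f
    exact ⟨0, by rintro x ⟨s, rfl⟩; exact Metric.infDist_nonneg⟩
  have main : ∀ f g : ℝ → EuclideanSpace ℝ (Fin d),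
      (∀ s ∈ Set.Icc (0:ℝ) 1, ‖f s - g s‖ ≤ C) → clr Xobs f - clr Xobs g ≤ C := by
    intro f g hfg
    have h : ∀ s : Set.Icc (0:ℝ) 1, clr Xobs f - C ≤ Metric.infDist (g s) Xobs := by
      intro s
      have hchain : clr Xobs f ≤ Metric.infDist (g s) Xobs + C :=
        calc clr Xobs f ≤ Metric.infDist (f s) Xobs := ciInf_le (bdd f) s
          _ ≤ Metric.infDist (g s) Xobs + dist (f s) (g s) :=
              Metric.infDist_le_infDist_add_dist
          _ ≤ Metric.infDist (g s) Xobs + C := by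
              apply add_le_add_right
              rw [dist_eq_norm]
              exact hfg s s.2
      linarith
    have h2 : clr Xobs f - C ≤ clr Xobs g := le_ciInf h
    linarith
  rw [abs_sub_le_iff]
  constructor
  · exact main σ τ key
  · exact main τ σ (fun s hs => by rw [norm_sub_rev]; exact key s hs)
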